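/- Let f be a Fibonacci map. If a positive integer m has Fibonacci sum expression with leading summand S_n, and m ≠ S_n and m ≠ S_n+S_{n+2}, then c_m = f^m(c) lies strictly between d_n = f^{S_n}(c) and y_n = f^{S_n+S_{n+2}}(c) (both of which lie on the same side of c). -/

import Mathlib

/-!
Write `δ_k` for the distance from `c` to a nearest precritical point of order `S k`. No iterate
`f^[j]`, `0 < j < S k`, meets `c` on `(c, c + δ_k)`, so `f^[S k]` is monotone on `[c, c + δ_k]`;
being even about `c`, it maps points lying closer to `c` than `δ_k` in the order of their
distance to `c`. Through `S (k+2) = S (k+1) + S k` and the minimality of cutting times this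
squeezes the closest returns: `δ_k < |d_{k+1} - c|` and `|d_{k+2} - c| < δ_k`. Hence
`y_n = f^[S n] d_{n+2}` lies strictly between `c` and `d_n`, and inductively along the Fibonacci
expansion `m = S n + m'` the point `c_{m'}` is closer to `c` than `d_{n+2}` unless
`m' = S (n+2)`, so `c_m = f^[S n] c_{m'}` lies strictly between `d_n` and `y_n`.
-/

noncomputable section

/-- The Fibonacci numbers `S 0 = 1`, `S 1 = 2`, `S (k+2) = S (k+1) + S k`. -/
def fibS : ℕ → ℕ
  | 0 => 1
  | 1 => 2
  | n + 2 => fibS (n + 1) + fibS n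

/-- `f : [0,1] → [0,1]` is unimodal with critical point `c`: continuous, maps `[0,1]` into
itself, `f 0 = f 1 = 0`, `c ∈ (0,1)`, strictly increasing on `[0,c]`, strictly decreasing
on `[c,1]`. -/
def IsUnimodal (f : ℝ → ℝ) (c : ℝ) : Prop :=
  ContinuousOn f (Set.Icc 0 1) ∧ Set.MapsTo f (Set.Icc 0 1) (Set.Icc 0 1) ∧
  f 0 = 0 ∧ f 1 = 0 ∧ c ∈ Set.Ioo (0 : ℝ) 1 ∧
  StrictMonoOn f (Set.Icc 0 c) ∧ StrictAntiOn f (Set.Icc c 1)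

/-- `f` is symmetric about `c`: `f (2c - x) = f x` whenever both points lie in `[0,1]`
(the symmetric point of `x` is `x̂ = 2c - x`). -/
def SymmetricAbout (f : ℝ → ℝ) (c : ℝ) : Prop :=
  ∀ x ∈ Set.Icc (0 : ℝ) 1, 2 * c - x ∈ Set.Icc (0 : ℝ) 1 → f (2 * c - x) = f x

/-- The distance from `c` to a nearest `k`-th preimage `c₋ₖ` of `c` in `[0,1]`,
i.e. `|c₋ₖ - c| = |c₋ₖ|`. -/
def preimDist (f : ℝ → ℝ) (c : ℝ) (k : ℕ) : ℝ :=
  sInf ((fun x => |x - c|) '' {x | x ∈ Set.Icc (0 : ℝ) 1 ∧ f^[k] x = c})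

/-- `S` is the sequence of cutting times of `f`: `S 0 = 1`, and `S (i+1)` is the least
`k ≥ S i` for which the nearest `k`-th preimage `c₋ₖ` of `c` lies in the symmetric open
interval `(c₋ₛᵢ, (c₋ₛᵢ)^)`, i.e. `c₋ₖ` exists and is strictly closer to `c` than `c₋ₛᵢ`. -/
def IsCuttingSeq (f : ℝ → ℝ) (c : ℝ) (S : ℕ → ℕ) : Prop :=
  S 0 = 1 ∧ ∀ i, IsLeast {k | S i ≤ k ∧
    ({x | x ∈ Set.Icc (0 : ℝ) 1 ∧ f^[k] x = c}).Nonempty ∧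
    preimDist f c k < preimDist f c (S i)} (S (i + 1))

/-- A Fibonacci map: a symmetric unimodal map whose cutting times are exactly the
Fibonacci numbers `1, 2, 3, 5, 8, …`. -/
def IsFibonacciMap (f : ℝ → ℝ) (c : ℝ) : Prop :=
  IsUnimodal f c ∧ SymmetricAbout f c ∧ IsCuttingSeq f c fibS

/-- `l` is the Fibonacci sum expression of `m`: a nonempty list of indices
`k₁, k₂, …` with `k_{i+1} ≥ k_i + 2` for each `i`, with `S_{k₁} + S_{k₂} + ⋯ = m`.
The leading summand is `fibS n` where `l.head? = some n`. -/
def IsFibExpansion (l : List ℕ) (m : ℕ) : Prop :=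
  l ≠ [] ∧ l.Chain' (fun a b => a + 2 ≤ b) ∧ (l.map fibS).sum = m

open Set Function

lemma fibS_pos : ∀ n, 0 < fibS n
  | 0 => one_pos
  | 1 => two_pos
  | n + 2 => Nat.add_pos_left (fibS_pos (n + 1)) _

lemma fibS_lt_fibS_succ : ∀ n, fibS n < fibS (n + 1)
  | 0 => by decide
  | n + 1 => Nat.lt_add_of_pos_right (fibS_pos n)

lemma abs_sub_lt_of_mem_uIoo {c a y : ℝ} (hy : y ∈ uIoo c a) : |y - c| < |a - c| := by
  rw [uIoo_eq_union] at hy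
  rcases hy with ⟨h₁, h₂⟩ | ⟨h₁, h₂⟩
  · rw [abs_of_pos (by linarith), abs_of_pos (by linarith)]; linarith
  · rw [abs_of_neg (by linarith), abs_of_neg (by linarith)]; linarith

lemma uIoo_subset_uIoo_of_mem {c a y : ℝ} (hy : y ∈ uIoo c a) : uIoo a y ⊆ uIoo c a := by
  intro x hx
  simp only [uIoo_eq_union, mem_union, mem_Ioo] at hx hy ⊢
  rcases hy with ⟨h₁, h₂⟩ | ⟨h₁, h₂⟩ <;> rcases hx with ⟨g₁, g₂⟩ | ⟨g₁, g₂⟩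
  all_goals first
    | exact absurd g₁ (by linarith)
    | exact absurd g₂ (by linarith)
    | exact Or.inl ⟨by linarith, by linarith⟩
    | exact Or.inr ⟨by linarith, by linarith⟩

lemma mul_sub_pos_of_mem_uIoo {c a y : ℝ} (hy : y ∈ uIoo c a) : 0 < (a - c) * (y - c) := by
  rw [uIoo_eq_union] at hy
  rcases hy with ⟨h₁, h₂⟩ | ⟨h₁, h₂⟩
  · exact mul_pos (by linarith) (by linarith)
  · exact mul_pos_of_neg_of_neg (by linarith) (by linarith)

lemma exists_mem_uIcc_abs_sub_eq {c d r : ℝ} (hr : 0 ≤ r) (hrd : r ≤ |d - c|) :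
    ∃ p ∈ uIcc c d, |p - c| = r :=
  intermediate_value_uIcc (continuous_abs.comp (continuous_sub_right c)).continuousOn
    (by simp [hr, hrd])

variable {f : ℝ → ℝ} {c : ℝ}

namespace IsUnimodal

lemma center_mem (hu : IsUnimodal f c) : c ∈ Icc (0 : ℝ) 1 :=
  Ioo_subset_Icc_self hu.2.2.2.2.1

lemma mapsTo_iterate (hu : IsUnimodal f c) (k : ℕ) : MapsTo f^[k] (Icc 0 1) (Icc 0 1) :=
  hu.2.1.iterate k

lemma continuousOn_iterate (hu : IsUnimodal f c) (k : ℕ) : ContinuousOn f^[k] (Icc 0 1) := by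
  induction k with
  | zero => exact continuousOn_id
  | succ k ih => rw [iterate_succ']; exact hu.1.comp ih (hu.mapsTo_iterate k)

lemma injOn_of_not_lt_lt (hu : IsUnimodal f c) {s : Set ℝ} (hs : s ⊆ Icc 0 1)
    (hc : ∀ u ∈ s, ∀ v ∈ s, u < c → c < v → False) : InjOn f s := by
  by_cases h : ∃ u ∈ s, u < c
  · obtain ⟨u, hus, huc⟩ := h
    have hsc : s ⊆ Icc 0 c := fun v hv => ⟨(hs hv).1, not_lt.1 fun hcv => hc u hus v hv huc hcv⟩
    exact hu.2.2.2.2.2.1.injOn.mono hsc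
  · push Not at h
    have hsc : s ⊆ Icc c 1 := fun v hv => ⟨h v hv, (hs hv).2⟩
    exact hu.2.2.2.2.2.2.injOn.mono hsc

lemma injOn_iterate (hu : IsUnimodal f c) {a b : ℝ} (ha : 0 ≤ a) (hb : b ≤ 1) {k : ℕ}
    (hcrit : ∀ j < k, ∀ x ∈ Ioo a b, f^[j] x ≠ c) : InjOn f^[k] (Icc a b) := by
  have hsub : Icc a b ⊆ Icc 0 1 := Icc_subset_Icc ha hb
  induction k with
  | zero => exact injOn_id _
  | succ k ih =>
    rw [iterate_succ']
    refine InjOn.comp ?_ (ih fun j hj => hcrit j (by omega)) (mapsTo_image _ _)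
    refine hu.injOn_of_not_lt_lt ((image_mono hsub).trans (hu.mapsTo_iterate k).image_subset) ?_
    rintro _ ⟨x₁, hx₁, rfl⟩ _ ⟨x₂, hx₂, rfl⟩ h₁ h₂
    obtain ⟨x, hx, hxc⟩ := intermediate_value_uIcc
      ((hu.continuousOn_iterate k).mono (uIcc_subset_Icc (hsub hx₁) (hsub hx₂)))
      (Icc_subset_uIcc ⟨h₁.le, h₂.le⟩ : c ∈ uIcc (f^[k] x₁) (f^[k] x₂))
    have hx' : x ∈ uIoo x₁ x₂ := by
      have hne₁ : x ≠ x₁ := by rintro rfl; linarith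
      have hne₂ : x ≠ x₂ := by rintro rfl; linarith
      refine ⟨hx.1.lt_of_ne ?_, hx.2.lt_of_ne ?_⟩
      · rcases min_choice x₁ x₂ with h | h <;> rw [h] <;> exact Ne.symm ‹_›
      · rcases max_choice x₁ x₂ with h | h <;> rw [h] <;> assumption
    exact hcrit k k.lt_succ_self x (uIoo_subset_Ioo hx₁ hx₂ hx') hxc

lemma strictMonoOn_or_strictAntiOn_iterate (hu : IsUnimodal f c) {a b : ℝ} (ha : 0 ≤ a)
    (hb : b ≤ 1) (hab : a ≤ b) {k : ℕ} (hcrit : ∀ j < k, ∀ x ∈ Ioo a b, f^[j] x ≠ c) :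
    StrictMonoOn f^[k] (Icc a b) ∨ StrictAntiOn f^[k] (Icc a b) :=
  ((hu.continuousOn_iterate k).mono (Icc_subset_Icc ha hb)).strictMonoOn_of_injOn_Icc' hab
    (hu.injOn_iterate ha hb hcrit)

end IsUnimodal

namespace SymmetricAbout

lemma center_eq_half (hs : SymmetricAbout f c) (hu : IsUnimodal f c) : c = 1 / 2 := by
  obtain ⟨-, -, hf0, hf1, ⟨hc0, hc1⟩, hmono, hanti⟩ := hu
  rcases lt_trichotomy c (1 / 2) with h | h | h
  · have h2c := hs 0 (by norm_num) ⟨by linarith, by linarith⟩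
    have := hanti ⟨by linarith, by linarith⟩ ⟨hc1.le, le_rfl⟩ (by linarith : 2 * c - 0 < 1)
    linarith
  · exact h
  · have h2c := hs 1 (by norm_num) ⟨by linarith, by linarith⟩
    have := hmono ⟨le_rfl, hc0.le⟩ ⟨by linarith, by linarith⟩ (by linarith : 0 < 2 * c - 1)
    linarith

lemma center_add_abs_mem (hs : SymmetricAbout f c) (hu : IsUnimodal f c) {x : ℝ}
    (hx : x ∈ Icc (0 : ℝ) 1) : c + |x - c| ∈ Icc (0 : ℝ) 1 := by
  rw [hs.center_eq_half hu]
  obtain ⟨h₀, h₁⟩ := hx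
  constructor <;> cases abs_cases (x - 1 / 2) <;> linarith

lemma iterate_center_add_abs (hs : SymmetricAbout f c) (hu : IsUnimodal f c) {k : ℕ}
    (hk : k ≠ 0) {x : ℝ} (hx : x ∈ Icc (0 : ℝ) 1) : f^[k] (c + |x - c|) = f^[k] x := by
  obtain ⟨k, rfl⟩ := Nat.exists_eq_succ_of_ne_zero hk
  rcases le_or_gt c x with h | h
  · rw [abs_of_nonneg (sub_nonneg.2 h), add_sub_cancel]
  · have hmirror : c + |x - c| = 2 * c - x := by rw [abs_of_neg (sub_neg.2 h)]; ring
    rw [iterate_succ_apply, iterate_succ_apply, hmirror,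
      hs x hx (hmirror ▸ hs.center_add_abs_mem hu hx)]

end SymmetricAbout

lemma preimDist_nonneg (f : ℝ → ℝ) (c : ℝ) (k : ℕ) : 0 ≤ preimDist f c k :=
  Real.sInf_nonneg (by rintro _ ⟨x, -, rfl⟩; exact abs_nonneg _)

lemma preimDist_le_abs_sub {k : ℕ} {x : ℝ} (hx : x ∈ Icc (0 : ℝ) 1) (hfx : f^[k] x = c) :
    preimDist f c k ≤ |x - c| :=
  csInf_le ⟨0, by rintro _ ⟨z, -, rfl⟩; exact abs_nonneg _⟩ ⟨x, ⟨hx, hfx⟩, rfl⟩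

lemma SymmetricAbout.iterate_center_add_preimDist (hs : SymmetricAbout f c)
    (hu : IsUnimodal f c) {k : ℕ} (hk : k ≠ 0)
    (hne : {x | x ∈ Icc (0 : ℝ) 1 ∧ f^[k] x = c}.Nonempty) :
    c + preimDist f c k ∈ Icc (0 : ℝ) 1 ∧ f^[k] (c + preimDist f c k) = c := by
  have hcompact : IsCompact {x | x ∈ Icc (0 : ℝ) 1 ∧ f^[k] x = c} :=
    isCompact_Icc.of_isClosed_subset
      ((hu.continuousOn_iterate k).preimage_isClosed_of_isClosed isClosed_Icc isClosed_singleton)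
      fun x hx => hx.1
  obtain ⟨z, ⟨hz, hfz⟩, hdist⟩ :=
    (hcompact.image (show Continuous fun x : ℝ => |x - c| by fun_prop)).sInf_mem (hne.image _)
  rw [preimDist, ← hdist]
  exact ⟨hs.center_add_abs_mem hu hz, (hs.iterate_center_add_abs hu hk hz).trans hfz⟩

namespace IsCuttingSeq

variable {S : ℕ → ℕ}

lemma preimDist_succ_lt (hS : IsCuttingSeq f c S) (i : ℕ) :
    preimDist f c (S (i + 1)) < preimDist f c (S i) :=
  (hS.2 i).1.2.2

lemma preimDist_pos (hS : IsCuttingSeq f c S) (i : ℕ) : 0 < preimDist f c (S i) :=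
  (preimDist_nonneg f c _).trans_lt (hS.preimDist_succ_lt i)

lemma pos (hS : IsCuttingSeq f c S) : ∀ i, 0 < S i
  | 0 => hS.1 ▸ one_pos
  | i + 1 => (hS.pos i).trans_le (hS.2 i).1.1

lemma preimage_nonempty (hS : IsCuttingSeq f c S) (hu : IsUnimodal f c) :
    ∀ i, {x | x ∈ Icc (0 : ℝ) 1 ∧ f^[S i] x = c}.Nonempty
  | 0 => by
    -- a preimage of `c` of any positive order yields one of order `1 = S 0`
    obtain ⟨z, hz, hfz⟩ := (hS.2 0).1.2.1
    obtain ⟨k, hk⟩ := Nat.exists_eq_add_of_lt (hS.pos 1)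
    rw [hk, zero_add, iterate_succ_apply'] at hfz
    exact ⟨f^[k] z, hu.mapsTo_iterate k hz, by rw [hS.1, iterate_one, hfz]⟩
  | i + 1 => (hS.2 i).1.2.1

lemma center_add_preimDist (hS : IsCuttingSeq f c S) (hu : IsUnimodal f c)
    (hs : SymmetricAbout f c) (i : ℕ) :
    c + preimDist f c (S i) ∈ Icc (0 : ℝ) 1 ∧ f^[S i] (c + preimDist f c (S i)) = c :=
  hs.iterate_center_add_preimDist hu (hS.pos i).ne' (hS.preimage_nonempty hu i)

lemma preimDist_le_of_le_of_lt (hS : IsCuttingSeq f c S) {i k : ℕ} (hik : S i ≤ k)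
    (hki : k < S (i + 1)) {x : ℝ} (hx : x ∈ Icc (0 : ℝ) 1) (hfx : f^[k] x = c) :
    preimDist f c (S i) ≤ |x - c| := by
  by_contra! h
  exact hki.not_ge ((hS.2 i).2 ⟨hik, ⟨x, hx, hfx⟩, (preimDist_le_abs_sub hx hfx).trans_lt h⟩)

lemma preimDist_le_of_lt (hS : IsCuttingSeq f c S) {i k : ℕ} (hk : k ≠ 0) (hki : k < S (i + 1))
    {x : ℝ} (hx : x ∈ Icc (0 : ℝ) 1) (hfx : f^[k] x = c) : preimDist f c (S i) ≤ |x - c| := by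
  induction i with
  | zero => exact hS.preimDist_le_of_le_of_lt (by rw [hS.1]; omega) hki hx hfx
  | succ i ih =>
    rcases lt_or_ge k (S (i + 1)) with h | h
    · exact (hS.preimDist_succ_lt i).le.trans (ih h)
    · exact hS.preimDist_le_of_le_of_lt h hki hx hfx

lemma strictMonoOn_or_strictAntiOn_iterate (hS : IsCuttingSeq f c S) (hu : IsUnimodal f c)
    (hs : SymmetricAbout f c) (n : ℕ) :
    StrictMonoOn f^[S n] (Icc c (c + preimDist f c (S n))) ∨
      StrictAntiOn f^[S n] (Icc c (c + preimDist f c (S n))) := by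
  have hδ := hS.preimDist_pos n
  refine hu.strictMonoOn_or_strictAntiOn_iterate hu.center_mem.1
    (hS.center_add_preimDist hu hs n).1.2 (by linarith) ?_
  rintro j hj x ⟨hcx, hxδ⟩ hfx
  rcases Nat.eq_zero_or_pos j with rfl | hj₀
  · exact hcx.ne' hfx
  obtain ⟨i, rfl⟩ : ∃ i, n = i + 1 :=
    Nat.exists_eq_succ_of_ne_zero (by rintro rfl; rw [hS.1] at hj; omega)
  have hx : x ∈ Icc (0 : ℝ) 1 := ⟨by linarith [hu.center_mem.1],
    by linarith [(hS.center_add_preimDist hu hs (i + 1)).1.2]⟩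
  have := hS.preimDist_le_of_lt hj₀.ne' hj hx hfx
  rw [abs_of_pos (sub_pos.2 hcx)] at this
  linarith [hS.preimDist_succ_lt i]

lemma iterate_mem_uIoo (hS : IsCuttingSeq f c S) (hu : IsUnimodal f c)
    (hs : SymmetricAbout f c) (n : ℕ) {x y : ℝ} (hx : x ∈ Icc (0 : ℝ) 1)
    (hy : y ∈ Icc (0 : ℝ) 1) (hxc : x ≠ c) (hxy : |x - c| < |y - c|)
    (hyδ : |y - c| ≤ preimDist f c (S n)) :
    f^[S n] x ∈ uIoo (f^[S n] c) (f^[S n] y) := by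
  have hx₀ : 0 < |x - c| := abs_pos.2 (sub_ne_zero.2 hxc)
  have hc' : c ∈ Icc c (c + preimDist f c (S n)) := ⟨le_rfl, by linarith⟩
  have hx' : c + |x - c| ∈ Icc c (c + preimDist f c (S n)) := ⟨by linarith, by linarith⟩
  have hy' : c + |y - c| ∈ Icc c (c + preimDist f c (S n)) := ⟨by linarith, by linarith⟩
  have hcx : c < c + |x - c| := by linarith
  have hxy' : c + |x - c| < c + |y - c| := by linarith
  rw [← hs.iterate_center_add_abs hu (hS.pos n).ne' hx,
    ← hs.iterate_center_add_abs hu (hS.pos n).ne' hy]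
  rcases hS.strictMonoOn_or_strictAntiOn_iterate hu hs n with h | h
  · exact mem_uIoo_of_lt (h hc' hx' hcx) (h hx' hy' hxy')
  · exact mem_uIoo_of_gt (h hx' hy' hxy') (h hc' hx' hcx)

end IsCuttingSeq

namespace IsFibonacciMap

lemma preimDist_lt_abs_iterate_fibS_succ_sub (hf : IsFibonacciMap f c) (N : ℕ) :
    preimDist f c (fibS N) < |f^[fibS (N + 1)] c - c| := by
  obtain ⟨hu, hs, hS⟩ := hf
  obtain ⟨hζ, hfζ⟩ := hS.center_add_preimDist hu hs (N + 2)
  obtain ⟨hb, hfb⟩ := hS.center_add_preimDist hu hs (N + 1)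
  -- `w = f^[S (N+1)] (c + δ_{N+2})` is a preimage of `c` of order `S N` strictly between
  -- `c` and `d_{N+1}`
  set w := f^[fibS (N + 1)] (c + preimDist f c (fibS (N + 2)))
  have hw : f^[fibS N] w = c := by
    rw [← iterate_add_apply, add_comm]
    exact hfζ
  have hwN := hS.preimDist_le_of_le_of_lt le_rfl (fibS_lt_fibS_succ N)
    (hu.mapsTo_iterate _ hζ) hw
  have hδ₂ := hS.preimDist_pos (N + 2)
  have hδ₁ := hS.preimDist_pos (N + 1)
  have hwd := hS.iterate_mem_uIoo hu hs (N + 1) hζ hb (by linarith)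
    (by simpa only [add_sub_cancel_left, abs_of_pos hδ₁, abs_of_pos hδ₂]
      using hS.preimDist_succ_lt (N + 1))
    (by rw [add_sub_cancel_left, abs_of_pos hδ₁])
  rw [hfb, uIoo_comm] at hwd
  linarith [abs_sub_lt_of_mem_uIoo hwd]

lemma iterate_fibS_succ_ne (hf : IsFibonacciMap f c) (N : ℕ) : f^[fibS (N + 1)] c ≠ c := by
  intro h
  have := hf.preimDist_lt_abs_iterate_fibS_succ_sub N
  rw [h, sub_self, abs_zero] at this
  exact this.not_ge (preimDist_nonneg f c _)

lemma abs_iterate_fibS_add_two_sub_lt (hf : IsFibonacciMap f c) (N : ℕ) :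
    |f^[fibS (N + 2)] c - c| < preimDist f c (fibS N) := by
  obtain ⟨hu, hs, hS⟩ := hf
  by_contra! hle
  obtain ⟨hb, hgb⟩ := hS.center_add_preimDist hu hs (N + 2)
  have hδ₂ := hS.preimDist_pos (N + 2)
  -- a preimage `p` of `c` of order `S N` between `c` and `d_{N+2}` ...
  obtain ⟨p, hp, hpc⟩ := exists_mem_uIcc_abs_sub_eq (preimDist_nonneg f c _) hle
  have hp₀ : p ∈ Icc (0 : ℝ) 1 :=
    uIcc_subset_Icc hu.center_mem (hu.mapsTo_iterate _ hu.center_mem) hp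
  have hfp : f^[fibS N] p = c := by
    rw [← hs.iterate_center_add_abs hu (fibS_pos N).ne' hp₀, hpc]
    exact (hS.center_add_preimDist hu hs N).2
  -- ... is `f^[S (N+2)] x` for some `x` with `|x - c| < δ_{N+2}`,
  obtain ⟨x, hx, hgx⟩ := intermediate_value_uIcc
    ((hu.continuousOn_iterate _).mono (uIcc_subset_Icc hu.center_mem hb))
    (by rwa [hgb, uIcc_comm] : p ∈ uIcc (f^[fibS (N + 2)] c) (f^[fibS (N + 2)] _))
  rw [uIcc_of_le (by linarith)] at hx
  have hxb : x ≠ c + preimDist f c (fibS (N + 2)) := by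
    rintro rfl
    rw [hgb] at hgx
    rw [← hgx, sub_self, abs_zero] at hpc
    linarith [hS.preimDist_pos N]
  have hxc : |x - c| < preimDist f c (fibS (N + 2)) := by
    rw [abs_of_nonneg (by linarith [hx.1])]
    linarith [lt_of_le_of_ne hx.2 hxb]
  -- ... and `S N + S (N+2) < S (N+3)` contradicts the definition of `S (N+3)`.
  have := hS.preimDist_le_of_le_of_lt (i := N + 2) (k := fibS N + fibS (N + 2)) le_add_self
    (by have := fibS_lt_fibS_succ N; simp only [fibS]; omega)
    (Icc_subset_Icc hu.center_mem.1 hb.2 hx) (by rw [iterate_add_apply, hgx, hfp])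
  linarith

lemma strictAnti_abs_iterate_fibS_succ_sub (hf : IsFibonacciMap f c) :
    StrictAnti fun k => |f^[fibS (k + 1)] c - c| :=
  strictAnti_nat_of_succ_lt fun k =>
    (hf.abs_iterate_fibS_add_two_sub_lt k).trans (hf.preimDist_lt_abs_iterate_fibS_succ_sub k)

lemma iterate_fibS_mem_uIoo (hf : IsFibonacciMap f c) (n : ℕ) {x : ℝ}
    (hx : x ∈ Icc (0 : ℝ) 1) (hxc : x ≠ c) (hxd : |x - c| < |f^[fibS (n + 2)] c - c|) :
    f^[fibS n] x ∈ uIoo (f^[fibS n] c) (f^[fibS n + fibS (n + 2)] c) := by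
  rw [iterate_add_apply]
  exact hf.2.2.iterate_mem_uIoo hf.1 hf.2.1 n hx (hf.1.mapsTo_iterate _ hf.1.center_mem) hxc hxd
    (hf.abs_iterate_fibS_add_two_sub_lt n).le

lemma iterate_fibS_add_mem_uIoo (hf : IsFibonacciMap f c) (n : ℕ) :
    f^[fibS n + fibS (n + 2)] c ∈ uIoo c (f^[fibS n] c) := by
  obtain ⟨hb, hgb⟩ := hf.2.2.center_add_preimDist hf.1 hf.2.1 n
  have hδ : |c + preimDist f c (fibS n) - c| = preimDist f c (fibS n) := by
    rw [add_sub_cancel_left, abs_of_pos (hf.2.2.preimDist_pos n)]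
  have := hf.2.2.iterate_mem_uIoo hf.1 hf.2.1 n (hf.1.mapsTo_iterate _ hf.1.center_mem) hb
    (hf.iterate_fibS_succ_ne (n + 1))
    (by rw [hδ]; exact hf.abs_iterate_fibS_add_two_sub_lt n) hδ.le
  rwa [hgb, uIoo_comm, ← iterate_add_apply] at this

lemma iterate_sum_fibS_mem_uIoo (hf : IsFibonacciMap f c) :
    ∀ (t : List ℕ) (n : ℕ), (n :: t).IsChain (fun a b => a + 2 ≤ b) →
      t = [] ∨ t = [n + 2] ∨
        f^[((n :: t).map fibS).sum] c ∈ uIoo (f^[fibS n] c) (f^[fibS n + fibS (n + 2)] c)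
  | [], _, _ => Or.inl rfl
  | k :: t, n, hch => by
    obtain ⟨hnk, hch⟩ := List.isChain_cons_cons.mp hch
    set x := f^[((k :: t).map fibS).sum] c
    have hxk : t = [] ∨ x ∈ uIoo c (f^[fibS k] c) := by
      rcases iterate_sum_fibS_mem_uIoo hf t k hch with ht | rfl | hmem
      · exact Or.inl ht
      · exact Or.inr (by simpa [x] using hf.iterate_fibS_add_mem_uIoo k)
      · exact Or.inr (uIoo_subset_uIoo_of_mem (hf.iterate_fibS_add_mem_uIoo k) hmem)
    obtain ⟨j, rfl⟩ : ∃ j, k = j + 1 := ⟨k - 1, by omega⟩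
    have hanti := hf.strictAnti_abs_iterate_fibS_succ_sub
    have hclose : (t = [] ∧ j = n + 1) ∨ (x ≠ c ∧ |x - c| < |f^[fibS (n + 2)] c - c|) := by
      rcases hxk with rfl | hmem
      · rcases eq_or_lt_of_le (show n + 1 ≤ j by omega) with rfl | hlt
        · exact Or.inl ⟨rfl, rfl⟩
        · refine Or.inr ⟨?_, ?_⟩ <;> simp only [x, List.map_cons, List.map_nil, List.sum_cons,
            List.sum_nil, add_zero]
          exacts [hf.iterate_fibS_succ_ne j, hanti hlt]
      · exact Or.inr ⟨fun h => left_notMem_uIoo (h ▸ hmem),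
          (abs_sub_lt_of_mem_uIoo hmem).trans_le (hanti.antitone (show n + 1 ≤ j by omega))⟩
    have hsum : f^[((n :: (j + 1) :: t).map fibS).sum] c = f^[fibS n] x := by
      rw [List.map_cons, List.sum_cons, iterate_add_apply]
    rcases hclose with ⟨rfl, rfl⟩ | ⟨hxc, hxd⟩
    · exact Or.inr (Or.inl rfl)
    · exact Or.inr (Or.inr (hsum ▸ hf.iterate_fibS_mem_uIoo n
        (hf.1.mapsTo_iterate _ hf.1.center_mem) hxc hxd))

end IsFibonacciMap

/-- For a Fibonacci map, if `m` has Fibonacci sum expression with leading summand `S_n`,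
and `m ≠ S_n`, `m ≠ S_n + S_{n+2}`, then `c_m = f^m(c)` lies strictly between
`d_n = f^{S_n}(c)` and `y_n = f^{S_n + S_{n+2}}(c)`, which lie on the same side of `c`. -/
theorem fibonacci_orbit_point_between_d_and_y (f : ℝ → ℝ) (c : ℝ)
    (hf : IsFibonacciMap f c) (m n : ℕ) (l : List ℕ)
    (hl : IsFibExpansion l m) (hn : l.head? = some n)
    (hm1 : m ≠ fibS n) (hm2 : m ≠ fibS n + fibS (n + 2)) :
    (f^[fibS n] c - c) * (f^[fibS n + fibS (n + 2)] c - c) > 0 ∧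
    f^[m] c ∈ Set.uIoo (f^[fibS n] c) (f^[fibS n + fibS (n + 2)] c) := by
  refine ⟨mul_sub_pos_of_mem_uIoo (hf.iterate_fibS_add_mem_uIoo n), ?_⟩
  obtain ⟨-, hch, rfl⟩ := hl
  obtain ⟨t, rfl⟩ : ∃ t, l = n :: t := List.head?_eq_some_iff.mp hn
  rcases hf.iterate_sum_fibS_mem_uIoo t n hch with rfl | rfl | h
  · simp at hm1
  · simp at hm2
  · exact h
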